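/- arXiv:1906.01142 — 5 statements merged into one kernel-verified Lean document; each statement's English description precedes it below -/
import Mathlib

section
/- Define J_N(α) = ⌈((1+α)(N-1)-1)/2⌉ / ((1+α_sys)(N-1)) for N ≥ 3 and fixed α_sys > 0, 0 < α < 1. If α ∈ I_k := ((k-1)/k, k/(k+1)] for a positive integer k, then inf_{N ≥ 3} J_N(α) = (k/(k+1))·(1/(1+α_sys)). -/
theorem min_star_efficiency (αsys α : ℝ) (hs : 0 < αsys) (h0 : 0 < α) (h1 : α < 1)
    (k : ℕ) (hk : 1 ≤ k) (hkl : ((k : ℝ) - 1) / k < α) (hku : α ≤ (k : ℝ) / ((k : ℝ) + 1)) :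
    IsLeast {r : ℝ | ∃ N : ℕ, 3 ≤ N ∧
        r = (⌈((1 + α) * ((N : ℝ) - 1) - 1) / 2⌉ : ℝ) / ((1 + αsys) * ((N : ℝ) - 1))}
      ((k : ℝ) / (((k : ℝ) + 1) * (1 + αsys))) := by
  have hk1 : (1:ℝ) ≤ (k:ℝ) := by exact_mod_cast hk
  have hkpos : (0:ℝ) < (k:ℝ) := by linarith
  have hkl' : (k:ℝ) - 1 < α * k := by
    have := (div_lt_iff₀ hkpos).mp hkl
    linarith
  have hku' : α * ((k:ℝ) + 1) ≤ k := by
    have := (le_div_iff₀ (by linarith : (0:ℝ) < (k:ℝ)+1)).mp hku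
    linarith
  constructor
  · refine ⟨k + 2, by omega, ?_⟩
    have hcast : ((k + 2 : ℕ) : ℝ) - 1 = (k:ℝ) + 1 := by push_cast; ring
    rw [hcast]
    have hceil : ⌈((1 + α) * ((k:ℝ) + 1) - 1) / 2⌉ = (k : ℤ) := by
      rw [Int.ceil_eq_iff]
      constructor
      · push_cast
        rw [lt_div_iff₀ (by norm_num : (0:ℝ) < 2)]
        nlinarith
      · push_cast
        rw [div_le_iff₀ (by norm_num : (0:ℝ) < 2)]
        nlinarith
    rw [hceil]
    push_cast
    ring
  · rintro r ⟨N, hN3, rfl⟩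
    set M : ℤ := (N : ℤ) - 1 with hM
    have hNR : ((N:ℝ) - 1) = (M:ℝ) := by push_cast [hM]; ring
    have hM2 : (2:ℤ) ≤ M := by omega
    have hm2 : (2:ℝ) ≤ (M:ℝ) := by exact_mod_cast hM2
    rw [hNR]
    set c : ℤ := ⌈((1 + α) * ((M:ℝ)) - 1) / 2⌉ with hc
    have hx : ((2*(k:ℝ) - 1) * (M:ℝ) - (k:ℝ)) / (2*(k:ℝ)) < ((1 + α) * (M:ℝ) - 1) / 2 := by
      rw [div_lt_div_iff₀ (by positivity) (by norm_num : (0:ℝ) < 2)]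
      nlinarith
    have hcb : ((2*(k:ℝ) - 1) * (M:ℝ) - (k:ℝ)) / (2*(k:ℝ)) < (c:ℝ) :=
      lt_of_lt_of_le hx (Int.le_ceil _)
    have key : (k:ℝ) * (M:ℝ) ≤ (c:ℝ) * ((k:ℝ) + 1) := by
      have keyZ : (k:ℤ) * M ≤ c * ((k:ℤ) + 1) := by
        rcases le_or_gt (M:ℝ) (k:ℝ) with hmk | hmk
        · -- m ≤ k: then c > m - 1, so c ≥ M
          have h1 : (M:ℝ) - 1 < (c:ℝ) := by
            have : (M:ℝ) - 1 ≤ ((2*(k:ℝ) - 1) * (M:ℝ) - (k:ℝ)) / (2*(k:ℝ)) := by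
              rw [le_div_iff₀ (by positivity)]
              nlinarith
            linarith
          have hMc : M ≤ c := by
            have : (M:ℝ) - 1 < (c:ℝ) := h1
            have := (by exact_mod_cast this : (M:ℤ) - 1 < c)
            omega
          have hM0 : 0 ≤ M := by omega
          nlinarith [hMc, hM0]
        · -- m > k: then c > (k*M - 1)/(k+1)
          have h1 : ((k:ℝ) * (M:ℝ) - 1) / ((k:ℝ) + 1) < (c:ℝ) := by
            have hle : ((k:ℝ) * (M:ℝ) - 1) / ((k:ℝ) + 1) ≤
                ((2*(k:ℝ) - 1) * (M:ℝ) - (k:ℝ)) / (2*(k:ℝ)) := by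
              rw [div_le_div_iff₀ (by linarith) (by positivity)]
              nlinarith
            linarith
          have h2 : (k:ℝ) * (M:ℝ) - 1 < (c:ℝ) * ((k:ℝ) + 1) := by
            rw [div_lt_iff₀ (by linarith : (0:ℝ) < (k:ℝ)+1)] at h1
            linarith
          have h3 : (k:ℤ) * M - 1 < c * ((k:ℤ) + 1) := by exact_mod_cast h2
          omega
      exact_mod_cast keyZ
    rw [div_le_div_iff₀ (by positivity) (by nlinarith)]
    nlinarith [key, hs]
end

section
/- The worst-case broad risk R_b*(α), defined as 1 - (k/(k+1))/(1+α_sys) for α ∈ ((k-1)/k, k/(k+1)] (k = 1,2,…), 1 - 1/(1+α_sys) for α ∈ [1, 3/2], and 0 for α > 3/2, is monotonically nonincreasing in α on (0, ∞). -/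
theorem broad_risk_nonincreasing (αsys : ℝ) (hs : 0 < αsys) (Rb : ℝ → ℝ)
    (hI : ∀ k : ℕ, 1 ≤ k → ∀ α : ℝ, ((k : ℝ) - 1) / k < α → α ≤ (k : ℝ) / ((k : ℝ) + 1) →
      Rb α = 1 - ((k : ℝ) / ((k : ℝ) + 1)) / (1 + αsys))
    (h1 : ∀ α : ℝ, 1 ≤ α → α ≤ 3 / 2 → Rb α = 1 - 1 / (1 + αsys))
    (h2 : ∀ α : ℝ, 3 / 2 < α → Rb α = 0) :
    ∀ α α' : ℝ, 0 < α → α ≤ α' → Rb α' ≤ Rb α := by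
  have hsys : (0:ℝ) < 1 + αsys := by linarith
  -- every β ∈ (0,1) lies in some I_k
  have hmem : ∀ β : ℝ, 0 < β → β < 1 →
      ∃ k : ℕ, 1 ≤ k ∧ ((k:ℝ)-1)/k < β ∧ β ≤ (k:ℝ)/((k:ℝ)+1) := by
    intro β hb hb1
    have h1b : (0:ℝ) < 1 - β := by linarith
    set x := β / (1 - β) with hxdef
    have hx0 : 0 < x := div_pos hb h1b
    refine ⟨⌈x⌉₊, Nat.one_le_ceil_iff.mpr hx0, ?_, ?_⟩
    · have hk2 : (⌈x⌉₊ : ℝ) < x + 1 := Nat.ceil_lt_add_one hx0.le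
      have hkpos : (0:ℝ) < (⌈x⌉₊ : ℝ) := by
        exact_mod_cast Nat.ceil_pos.mpr hx0
      rw [div_lt_iff₀ hkpos]
      rw [hxdef, div_add' _ _ _ (ne_of_gt h1b)] at hk2
      rw [lt_div_iff₀ h1b] at hk2
      nlinarith
    · have hk1 : x ≤ (⌈x⌉₊ : ℝ) := Nat.le_ceil x
      have hkpos : (0:ℝ) < (⌈x⌉₊ : ℝ) + 1 := by positivity
      rw [hxdef, div_le_iff₀ h1b] at hk1
      rw [le_div_iff₀ hkpos]
      nlinarith
  -- Rb is nonnegative everywhere on (0, ∞)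
  have hnonneg : ∀ β : ℝ, 0 < β → 0 ≤ Rb β := by
    intro β hb
    rcases lt_trichotomy β 1 with hb1 | hb1 | hb1
    · obtain ⟨k, hk1, hlo, hhi⟩ := hmem β hb hb1
      rw [hI k hk1 β hlo hhi]
      have hkpos : (0:ℝ) < (k:ℝ) + 1 := by positivity
      have : (k:ℝ)/((k:ℝ)+1) ≤ 1 := by
        rw [div_le_one hkpos]; linarith
      have hd : (k:ℝ)/((k:ℝ)+1) / (1 + αsys) ≤ 1 := by
        calc (k:ℝ)/((k:ℝ)+1) / (1 + αsys) ≤ 1 / (1 + αsys) := by gcongr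
          _ ≤ 1 := by rw [div_le_one hsys]; linarith
      linarith
    · subst hb1
      rw [h1 1 le_rfl (by norm_num)]
      have : 1 / (1 + αsys) ≤ 1 := by rw [div_le_one hsys]; linarith
      linarith
    · rcases le_or_gt β (3/2) with h | h
      · rw [h1 β hb1.le h]
        have : 1 / (1 + αsys) ≤ 1 := by rw [div_le_one hsys]; linarith
        linarith
      · rw [h2 β h]
  intro α α' hα hle
  have hα' : 0 < α' := lt_of_lt_of_le hα hle
  rcases lt_or_ge (3/2 : ℝ) α' with h32 | h32
  · rw [h2 α' h32]; exact hnonneg α hα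
  rcases le_or_gt 1 α' with h1' | h1'
  · -- α' ∈ [1, 3/2]
    rw [h1 α' h1' h32]
    rcases le_or_gt 1 α with hα1 | hα1
    · rw [h1 α hα1 (le_trans hle h32)]
    · obtain ⟨k, hk1, hlo, hhi⟩ := hmem α hα hα1
      rw [hI k hk1 α hlo hhi]
      have hkpos : (0:ℝ) < (k:ℝ) + 1 := by positivity
      have : (k:ℝ)/((k:ℝ)+1) ≤ 1 := by rw [div_le_one hkpos]; linarith
      have : (k:ℝ)/((k:ℝ)+1) / (1 + αsys) ≤ 1 / (1 + αsys) := by gcongr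
      linarith
  · -- α ≤ α' < 1, both in some I_k
    have hα1 : α < 1 := lt_of_le_of_lt hle h1'
    obtain ⟨k, hk1, hlo, hhi⟩ := hmem α hα hα1
    obtain ⟨k', hk1', hlo', hhi'⟩ := hmem α' hα' h1'
    rw [hI k hk1 α hlo hhi, hI k' hk1' α' hlo' hhi']
    have hkk : k ≤ k' := by
      by_contra hc
      push_neg at hc
      have hle' : (k':ℝ) ≤ (k:ℝ) - 1 := by
        have h' : k' + 1 ≤ k := hc
        have h'' : ((k' + 1 : ℕ) : ℝ) ≤ (k : ℝ) := Nat.cast_le.mpr h'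
        push_cast at h''
        linarith
      have hkpos : (0:ℝ) < (k:ℝ) := by exact_mod_cast hk1
      have hk'pos : (0:ℝ) < (k':ℝ) + 1 := by positivity
      -- k'/(k'+1) ≤ (k-1)/k
      have hmono : (k':ℝ)/((k':ℝ)+1) ≤ ((k:ℝ)-1)/(k:ℝ) := by
        rw [div_le_div_iff₀ hk'pos hkpos]
        nlinarith
      have : α' ≤ ((k:ℝ)-1)/(k:ℝ) := le_trans hhi' hmono
      linarith
    have hkkR : (k:ℝ) ≤ (k':ℝ) := by exact_mod_cast hkk
    have hkpos : (0:ℝ) < (k:ℝ) + 1 := by positivity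
    have hk'pos : (0:ℝ) < (k':ℝ) + 1 := by positivity
    have hmono : (k:ℝ)/((k:ℝ)+1) ≤ (k':ℝ)/((k':ℝ)+1) := by
      rw [div_le_div_iff₀ hkpos hk'pos]; nlinarith
    have : (k:ℝ)/((k:ℝ)+1) / (1 + αsys) ≤ (k':ℝ)/((k':ℝ)+1) / (1 + αsys) := by gcongr
    linarith
end

section
/- Let M ≥ 1, reals ν_i, n_i, d_i with n_i ≥ 0, d_i > 0 and ν_i < n_i/d_i ≤ 1 for all i. Define s_i = (∑_{j=1}^{i-1} d_j + ∑_{j=i}^{M} n_j)/(∑_{j=1}^{M} d_j). Then for every probability vector p (p_i ≥ 0, ∑ p_i = 1), ∑_{i=1}^M p_i s_i ≥ 1 + min_{1 ≤ i ≤ M} (∑_{j=1}^{i} p_j)(ν_i - 1). -/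
theorem mixed_risk_lower_bound (M : ℕ) (hM : 1 ≤ M) (ν n d p : Fin M → ℝ)
    (hd : ∀ i, 0 < d i) (hn : ∀ i, 0 ≤ n i)
    (hν : ∀ i, ν i < n i / d i) (h1 : ∀ i, n i / d i ≤ 1)
    (hp : ∀ i, 0 ≤ p i) (hps : ∑ i, p i = 1) :
    ∑ i, p i * ((∑ j ∈ Finset.univ.filter (fun j => j < i), d j +
        ∑ j ∈ Finset.univ.filter (fun j => i ≤ j), n j) / ∑ j, d j)
      ≥ 1 + Finset.univ.inf' ⟨⟨0, hM⟩, Finset.mem_univ _⟩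
          (fun i => (∑ j ∈ Finset.univ.filter (fun j => j ≤ i), p j) * (ν i - 1)) := by
  have hD : 0 < ∑ j, d j := Finset.sum_pos (fun i _ => hd i) ⟨⟨0, hM⟩, Finset.mem_univ _⟩
  set D := ∑ j, d j with hDdef
  set m := Finset.univ.inf' ⟨⟨0, hM⟩, Finset.mem_univ _⟩
          (fun i : Fin M => (∑ j ∈ Finset.univ.filter (fun j => j ≤ i), p j) * (ν i - 1)) with hm
  -- abbreviate P
  have hPnn : ∀ j : Fin M, 0 ≤ ∑ i ∈ Finset.univ.filter (fun i => i ≤ j), p i :=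
    fun j => Finset.sum_nonneg fun i _ => hp i
  have hmle : ∀ j : Fin M,
      m ≤ (∑ i ∈ Finset.univ.filter (fun i => i ≤ j), p i) * (ν j - 1) :=
    fun j => Finset.inf'_le _ (Finset.mem_univ j)
  -- key term inequality
  have key : ∀ j : Fin M,
      (d j - n j) * (∑ i ∈ Finset.univ.filter (fun i => i ≤ j), p i) ≤ -(m * d j) := by
    intro j
    have h2 : ν j * d j < n j := (lt_div_iff₀ (hd j)).mp (hν j)
    have h3 : (d j - n j) * (∑ i ∈ Finset.univ.filter (fun i => i ≤ j), p i)
        ≤ (d j * (1 - ν j)) * (∑ i ∈ Finset.univ.filter (fun i => i ≤ j), p i) := by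
      apply mul_le_mul_of_nonneg_right _ (hPnn j); nlinarith
    have h4 : (d j * (1 - ν j)) * (∑ i ∈ Finset.univ.filter (fun i => i ≤ j), p i)
        = -(d j * ((∑ i ∈ Finset.univ.filter (fun i => i ≤ j), p i) * (ν j - 1))) := by ring
    have h5 : m * d j ≤ ((∑ i ∈ Finset.univ.filter (fun i => i ≤ j), p i) * (ν j - 1)) * d j :=
      mul_le_mul_of_nonneg_right (hmle j) (hd j).le
    nlinarith [hmle j]
  have hsum : ∑ j, (d j - n j) * (∑ i ∈ Finset.univ.filter (fun i => i ≤ j), p i)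
      ≤ -(m * D) := by
    calc ∑ j, (d j - n j) * (∑ i ∈ Finset.univ.filter (fun i => i ≤ j), p i)
        ≤ ∑ j, -(m * d j) := Finset.sum_le_sum fun j _ => key j
      _ = -(m * D) := by rw [Finset.sum_neg_distrib, ← Finset.mul_sum]
  -- identity
  have hAB : ∀ i : Fin M,
      (∑ j ∈ Finset.univ.filter (fun j => j < i), d j +
        ∑ j ∈ Finset.univ.filter (fun j => i ≤ j), n j)
      = D - ∑ j ∈ Finset.univ.filter (fun j => i ≤ j), (d j - n j) := by
    intro i
    have h := Finset.sum_filter_add_sum_filter_not Finset.univ (fun j => j < i) d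
    simp only [not_lt] at h
    rw [Finset.sum_sub_distrib]
    linarith [h]
  have hswap : ∑ i, p i * (∑ j ∈ Finset.univ.filter (fun j => i ≤ j), (d j - n j))
      = ∑ j, (d j - n j) * (∑ i ∈ Finset.univ.filter (fun i => i ≤ j), p i) := by
    simp_rw [Finset.mul_sum, Finset.sum_filter]
    rw [Finset.sum_comm]
    congr 1; ext j
    congr 1; ext i
    by_cases h : i ≤ j <;> simp [h, mul_comm]
  have hiden : ∑ i, p i * ((∑ j ∈ Finset.univ.filter (fun j => j < i), d j +
        ∑ j ∈ Finset.univ.filter (fun j => i ≤ j), n j) / D)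
      = 1 - (∑ j, (d j - n j) * (∑ i ∈ Finset.univ.filter (fun i => i ≤ j), p i)) / D := by
    rw [← hswap]
    have : ∀ i : Fin M, p i * ((∑ j ∈ Finset.univ.filter (fun j => j < i), d j +
        ∑ j ∈ Finset.univ.filter (fun j => i ≤ j), n j) / D)
        = p i - p i * (∑ j ∈ Finset.univ.filter (fun j => i ≤ j), (d j - n j)) / D := by
      intro i
      rw [hAB i]
      field_simp
    simp_rw [this]
    rw [Finset.sum_sub_distrib, hps, ← Finset.sum_div]
  rw [hiden]
  have : (∑ j, (d j - n j) * (∑ i ∈ Finset.univ.filter (fun i => i ≤ j), p i)) / D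
      ≤ (-(m * D)) / D := by gcongr
  have h6 : (-(m * D)) / D = -m := by field_simp
  linarith [this, h6]
end

section
/- Dual version: with the same hypotheses (ν_i < n_i/d_i ≤ 1, d_i > 0, n_i ≥ 0), define s'_i = (∑_{j=1}^{i} n_j + ∑_{j=i+1}^{M} d_j)/(∑_{j=1}^{M} d_j) [equivalently reversing indices]. Then for every probability vector p, ∑ p_i s'_i ≥ 1 + min_i (∑_{j=i}^{M} p_j)(ν_i - 1). -/
theorem mixed_risk_lower_bound_dual (M : ℕ) (hM : 1 ≤ M) (ν n d p : Fin M → ℝ)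
    (hd : ∀ i, 0 < d i) (hn : ∀ i, 0 ≤ n i)
    (hν : ∀ i, ν i < n i / d i) (h1 : ∀ i, n i / d i ≤ 1)
    (hp : ∀ i, 0 ≤ p i) (hps : ∑ i, p i = 1) :
    ∑ i, p i * ((∑ j ∈ Finset.univ.filter (fun j => j ≤ i), n j +
        ∑ j ∈ Finset.univ.filter (fun j => i < j), d j) / ∑ j, d j)
      ≥ 1 + Finset.univ.inf' ⟨⟨0, hM⟩, Finset.mem_univ _⟩
          (fun i => (∑ j ∈ Finset.univ.filter (fun j => i ≤ j), p j) * (ν i - 1)) := by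
  classical
  set D := ∑ j, d j with hDdef
  have hD : 0 < D := Finset.sum_pos (fun i _ => hd i) ⟨⟨0, hM⟩, Finset.mem_univ _⟩
  set T : Fin M → ℝ := fun j => ∑ i ∈ Finset.univ.filter (fun i => j ≤ i), p i with hTdef
  set m := Finset.univ.inf' ⟨⟨0, hM⟩, Finset.mem_univ _⟩
      (fun i => (∑ j ∈ Finset.univ.filter (fun j => i ≤ j), p j) * (ν i - 1)) with hmdef
  have hm : ∀ j : Fin M, m ≤ T j * (ν j - 1) := fun j => Finset.inf'_le _ (Finset.mem_univ j)
  have hsplit : ∀ i : Fin M,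
      (∑ j ∈ Finset.univ.filter (fun j => j ≤ i), n j +
        ∑ j ∈ Finset.univ.filter (fun j => i < j), d j)
      = D + ∑ j ∈ Finset.univ.filter (fun j => j ≤ i), (n j - d j) := by
    intro i
    have hDsplit : D = ∑ j ∈ Finset.univ.filter (fun j => j ≤ i), d j +
        ∑ j ∈ Finset.univ.filter (fun j => i < j), d j := by
      rw [hDdef, ← Finset.sum_filter_add_sum_filter_not Finset.univ (fun j => j ≤ i) d]
      congr 1
      apply Finset.sum_congr _ (fun _ _ => rfl)
      ext j; simp [not_le]
    rw [hDsplit, Finset.sum_sub_distrib]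
    ring
  have hswap : ∑ i, p i * ∑ j ∈ Finset.univ.filter (fun j => j ≤ i), (n j - d j)
      = ∑ j, (n j - d j) * T j := by
    simp_rw [Finset.mul_sum]
    rw [Finset.sum_comm' (s := Finset.univ) (t := fun i => Finset.univ.filter (fun j => j ≤ i))
      (t' := Finset.univ) (s' := fun j => Finset.univ.filter (fun i => j ≤ i))
      (by intro i j; simp)]
    apply Finset.sum_congr rfl
    intro j _
    rw [hTdef, Finset.mul_sum]
    apply Finset.sum_congr rfl
    intro i _; ring
  have hL : ∑ i, p i * ((∑ j ∈ Finset.univ.filter (fun j => j ≤ i), n j +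
        ∑ j ∈ Finset.univ.filter (fun j => i < j), d j) / D)
      = 1 + (∑ j, (n j - d j) * T j) / D := by
    have hstep : ∀ i : Fin M, p i * ((∑ j ∈ Finset.univ.filter (fun j => j ≤ i), n j +
        ∑ j ∈ Finset.univ.filter (fun j => i < j), d j) / D)
        = p i + p i * (∑ j ∈ Finset.univ.filter (fun j => j ≤ i), (n j - d j)) / D := by
      intro i
      rw [hsplit i, add_div, div_self (ne_of_gt hD), mul_add, mul_one, mul_div_assoc]
    simp_rw [hstep]
    rw [Finset.sum_add_distrib, hps, ← Finset.sum_div, hswap]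
  rw [ge_iff_le, hL, add_le_add_iff_left, le_div_iff₀ hD]
  calc m * D = ∑ j, d j * m := by rw [hDdef, Finset.mul_sum]; exact Finset.sum_congr rfl (fun j _ => mul_comm _ _)
    _ ≤ ∑ j, (n j - d j) * T j := by
        apply Finset.sum_le_sum
        intro j _
        have hT : 0 ≤ T j := Finset.sum_nonneg (fun i _ => hp i)
        have h2 : (ν j - 1) * d j ≤ n j - d j := by
          have := (lt_div_iff₀ (hd j)).mp (hν j)
          nlinarith
        calc d j * m ≤ d j * (T j * (ν j - 1)) :=
              mul_le_mul_of_nonneg_left (hm j) (le_of_lt (hd j))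
          _ = ((ν j - 1) * d j) * T j := by ring
          _ ≤ (n j - d j) * T j := mul_le_mul_of_nonneg_right h2 hT
end

section
/- Star-graph stability threshold: for a star with N-1 ≥ 2 leaves where the y-partition has N_y leaves plus the center (so 2·N_y + 1 ≥ (1+α)(N-1) is the stability condition), if α ∈ ((k-1)/k, k/(k+1)] and N = k+2, then N_y = k satisfies the stability condition and is the minimal such integer, yielding efficiency k/((k+1)(1+α_sys)). -/
theorem star_stability_threshold (k : ℕ) (hk : 1 ≤ k) (α αsys : ℝ) (hs : 0 < αsys)
    (hl : ((k : ℝ) - 1) / k < α) (hu : α ≤ (k : ℝ) / ((k : ℝ) + 1)) :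
    (2 * (k : ℝ) + 1 ≥ (1 + α) * ((k : ℝ) + 1)) ∧
    (2 * ((k : ℝ) - 1) + 1 < (1 + α) * ((k : ℝ) + 1)) ∧
    (k : ℝ) / (((k : ℝ) + 1) * (1 + αsys)) =
      (⌈((1 + α) * ((k : ℝ) + 1) - 1) / 2⌉ : ℝ) / ((1 + αsys) * ((k : ℝ) + 1)) := by
  have hk0 : (1 : ℝ) ≤ k := by exact_mod_cast hk
  have hk0' : (0 : ℝ) < k := by linarith
  have hk1 : (0 : ℝ) < (k : ℝ) + 1 := by linarith
  have hl' : (k : ℝ) - 1 < α * k := by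
    have := (div_lt_iff₀ hk0').mp hl; linarith
  have hu' : α * ((k : ℝ) + 1) ≤ k := (le_div_iff₀ hk1).mp hu
  have ha : 0 ≤ α := le_of_lt (lt_of_le_of_lt (div_nonneg (by linarith) (le_of_lt hk0')) hl)
  refine ⟨by nlinarith, by nlinarith, ?_⟩
  have hceil : ⌈((1 + α) * ((k : ℝ) + 1) - 1) / 2⌉ = (k : ℤ) := by
    rw [Int.ceil_eq_iff]
    push_cast
    constructor
    · rw [lt_div_iff₀ (by norm_num : (0:ℝ) < 2)]
      nlinarith [mul_pos hk0' hk0', hl']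
    · rw [div_le_iff₀ (by norm_num : (0:ℝ) < 2)]; nlinarith
  rw [hceil]
  push_cast
  ring
end
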